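/- arXiv:2506.05619 — 2 statements merged into one kernel-verified Lean document; each statement's English description precedes it below -/
import Mathlib

section
/- Let σ be a profile over rankings of M alternatives, let r̂ be a ranking with σ_{r̂} > 0, and let r' be a ranking that improves the position of y_i without changing the relative order of the other alternatives, i.e., r'(y_i) ≤ r̂(y_i) and for all j, k ≠ i: r'(y_j) < r'(y_k) if and only if r̂(y_j) < r̂(y_k). For 0 < ε ≤ σ_{r̂}, let σ' be the profile obtained from σ by moving mass ε from r̂ to r' (σ'_{r̂} = σ_{r̂} − ε, σ'_{r'} = σ_{r'} + ε, and σ'_r = σ_r otherwise). Then Φ*(σ')(y_i) ≥ Φ*(σ)(y_i); that is, the policy Φ* is monotone. -/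
/-!
Moving mass from `r̂` to `r'` can only raise `P(y_i ≻ y_j)`, because every `y_j` that `y_i` beats
in `r̂` it still beats in `r'`; for `j ≠ i` it can only lower `P(y_j ≻ y_k)`, because whatever
`y_j` beats in `r'` it already beat in `r̂`. So `u_i` weakly grows, every other `u_j` weakly
shrinks, and `u_i / (u_i + ∑_{j ≠ i} u_j)` is increasing in the first and decreasing in the rest.
-/

open Finset

noncomputable section

/-- A profile: a probability distribution over rankings (permutations of `Fin M`,
where `r i` is the 0-indexed position of alternative `i`, smaller is better). -/
def IsProfile (M : ℕ) (σ : Equiv.Perm (Fin M) → ℝ) : Prop :=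
  (∀ r, 0 ≤ σ r) ∧ ∑ r : Equiv.Perm (Fin M), σ r = 1

/-- Induced preference function `P^σ(y_i ≻ y_j)`. -/
def Pref (M : ℕ) (σ : Equiv.Perm (Fin M) → ℝ) (i j : Fin M) : ℝ :=
  ∑ r : Equiv.Perm (Fin M), σ r * (if r i < r j then (1 : ℝ) else 0)

/-- Top-choice share `w^σ_i`. -/
def topShare (M : ℕ) (σ : Equiv.Perm (Fin M) → ℝ) (i : Fin M) : ℝ :=
  ∑ r : Equiv.Perm (Fin M), (if (r i : ℕ) = 0 then σ r else 0)

/-- Borda score `B(y_i) = Σ_r σ_r (M − r(y_i))` (with 1-indexed ranks; here ranks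
are 0-indexed, so the weight is `M − 1 − r i`). -/
def Borda (M : ℕ) (σ : Equiv.Perm (Fin M) → ℝ) (i : Fin M) : ℝ :=
  ∑ r : Equiv.Perm (Fin M), σ r * ((M : ℝ) - 1 - ((r i : ℕ) : ℝ))

/-- `u_i := min_{j ≠ i} P^σ(y_i ≻ y_j)`. -/
def minPref (M : ℕ) (σ : Equiv.Perm (Fin M) → ℝ) (i : Fin M) : ℝ :=
  sInf {x : ℝ | ∃ j, j ≠ i ∧ x = Pref M σ i j}

/-- The policy `Φ*(σ)(y_i) := u_i / Σ_j u_j`. -/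
def PhiStar (M : ℕ) (σ : Equiv.Perm (Fin M) → ℝ) (i : Fin M) : ℝ :=
  minPref M σ i / ∑ j : Fin M, minPref M σ j

section Rank

variable {α : Type*} [Fintype α] {n : ℕ}

theorem card_filter_apply_lt (r : α ≃ Fin n) (x : α) : #{k | r k < r x} = r x := by
  rw [← Fin.card_Iio (r x)]
  exact Finset.card_equiv r (by simp)

theorem card_filter_ne_apply_lt_add [DecidableEq α] (r : α ≃ Fin n) (i j : α) :
    #{k | k ≠ i ∧ r k < r j} + (if r i < r j then 1 else 0) = r j := by
  rw [← card_filter_apply_lt r j, filter_and, filter_ne', erase_inter, univ_inter]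
  split_ifs with h
  · exact card_erase_add_one (by simpa using h)
  · rw [erase_eq_of_notMem (by simpa using h), add_zero]

def Improves (i : α) (rhat rnew : α ≃ Fin n) : Prop :=
  rnew i ≤ rhat i ∧ ∀ j k, j ≠ i → k ≠ i → (rnew j < rnew k ↔ rhat j < rhat k)

theorem Improves.self_lt_of_lt {i j : α} {rhat rnew : α ≃ Fin n} (himp : Improves i rhat rnew)
    (h : rhat i < rhat j) : rnew i < rnew j := by
  classical
  have hj : j ≠ i := by rintro rfl; exact lt_irrefl _ h
  by_contra hcon
  have hji : rnew j < rnew i :=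
    lt_of_le_of_ne (not_lt.mp hcon) fun he => hj (rnew.injective he)
  -- Both ranks of `j` count the same alternatives other than `i`; only `rhat` also counts `i`,
  -- so `rnew j + 1 = rhat j`, which leaves no room for `rnew j < rnew i ≤ rhat i < rhat j`.
  have hsame : (#{k | k ≠ i ∧ rnew k < rnew j} : ℕ) = #{k | k ≠ i ∧ rhat k < rhat j} := by
    congr 1
    ext k
    simp only [mem_filter, mem_univ, true_and, and_congr_right_iff]
    exact fun hk => himp.2 k j hk hj
  have hnew := card_filter_ne_apply_lt_add rnew i j
  have hhat := card_filter_ne_apply_lt_add rhat i j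
  rw [if_neg (asymm hji)] at hnew
  rw [if_pos h] at hhat
  have : (rnew i : ℕ) ≤ rhat i := himp.1
  have : (rhat i : ℕ) < rhat j := h
  have : (rnew j : ℕ) < rnew i := hji
  omega

theorem Improves.lt_of_lt_of_ne {i j k : α} {rhat rnew : α ≃ Fin n}
    (himp : Improves i rhat rnew) (hj : j ≠ i) (h : rnew j < rnew k) : rhat j < rhat k := by
  rcases eq_or_ne k i with rfl | hk
  · exact (lt_or_gt_of_ne fun he => hj (rhat.injective he)).resolve_right
      fun h' => asymm h (himp.self_lt_of_lt h')
  · exact (himp.2 j k hj hk).mp h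

end Rank

section Transfer

variable {M : ℕ} {σ σ' : Equiv.Perm (Fin M) → ℝ} {rhat rnew : Equiv.Perm (Fin M)} {ε : ℝ}

theorem nonneg_of_transfer (hσ : ∀ r, 0 ≤ σ r) (hε0 : 0 ≤ ε) (hε1 : ε ≤ σ rhat)
    (hσ' : ∀ r, σ' r = σ r + (if r = rnew then ε else 0) - (if r = rhat then ε else 0))
    (r : Equiv.Perm (Fin M)) : 0 ≤ σ' r := by
  rw [hσ' r]
  split_ifs with hnew hhat hhat
  · linarith [hσ r]
  · linarith [hσ r]
  · subst hhat; linarith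
  · linarith [hσ r]

theorem pref_of_transfer
    (hσ' : ∀ r, σ' r = σ r + (if r = rnew then ε else 0) - (if r = rhat then ε else 0))
    (a b : Fin M) :
    Pref M σ' a b = Pref M σ a b + ε * (if rnew a < rnew b then 1 else 0)
      - ε * (if rhat a < rhat b then 1 else 0) := by
  simp only [Pref, hσ', add_mul, sub_mul, sum_add_distrib, sum_sub_distrib, ite_mul, zero_mul,
    sum_ite_eq', mem_univ, if_true]

theorem pref_le_pref_of_transfer (hε : 0 ≤ ε)
    (hσ' : ∀ r, σ' r = σ r + (if r = rnew then ε else 0) - (if r = rhat then ε else 0))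
    {a b : Fin M} (h : rhat a < rhat b → rnew a < rnew b) : Pref M σ a b ≤ Pref M σ' a b := by
  rw [pref_of_transfer hσ', add_sub_assoc, le_add_iff_nonneg_right, sub_nonneg]
  gcongr
  split_ifs <;> simp_all

theorem pref_of_transfer_le_pref (hε : 0 ≤ ε)
    (hσ' : ∀ r, σ' r = σ r + (if r = rnew then ε else 0) - (if r = rhat then ε else 0))
    {a b : Fin M} (h : rnew a < rnew b → rhat a < rhat b) : Pref M σ' a b ≤ Pref M σ a b := by
  rw [pref_of_transfer hσ', add_sub_assoc, add_le_iff_nonpos_right, sub_nonpos]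
  gcongr
  split_ifs <;> simp_all

end Transfer

section MinPref

variable {M : ℕ} {σ τ : Equiv.Perm (Fin M) → ℝ}

theorem pref_nonneg (hσ : ∀ r, 0 ≤ σ r) (i j : Fin M) : 0 ≤ Pref M σ i j :=
  sum_nonneg fun r _ => mul_nonneg (hσ r) (by split_ifs <;> norm_num)

theorem minPref_nonneg (hσ : ∀ r, 0 ≤ σ r) (i : Fin M) : 0 ≤ minPref M σ i :=
  Real.sInf_nonneg <| by
    rintro _ ⟨j, -, rfl⟩
    exact pref_nonneg hσ i j

theorem minPref_le (σ : Equiv.Perm (Fin M) → ℝ) {i j : Fin M} (hj : j ≠ i) :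
    minPref M σ i ≤ Pref M σ i j := by
  refine csInf_le ((Set.finite_range (Pref M σ i)).subset ?_).bddBelow ⟨j, hj, rfl⟩
  rintro _ ⟨k, -, rfl⟩
  exact ⟨k, rfl⟩

theorem le_minPref (hM : 1 < M) {i : Fin M} {c : ℝ} (hc : ∀ j, j ≠ i → c ≤ Pref M σ i j) :
    c ≤ minPref M σ i := by
  obtain ⟨j, hj⟩ := Fintype.exists_ne_of_one_lt_card (by simpa using hM) i
  exact le_csInf ⟨_, j, hj, rfl⟩ (by rintro _ ⟨k, hk, rfl⟩; exact hc k hk)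

theorem minPref_mono (hM : 1 < M) {i : Fin M} (h : ∀ j, j ≠ i → Pref M σ i j ≤ Pref M τ i j) :
    minPref M σ i ≤ minPref M τ i :=
  le_minPref hM fun j hj => (minPref_le σ hj).trans (h j hj)

end MinPref

theorem div_add_le_div_add {a a' b b' : ℝ} (ha : 0 ≤ a) (hb' : 0 ≤ b') (haa' : a ≤ a')
    (hb'b : b' ≤ b) : a / (a + b) ≤ a' / (a' + b') := by
  rcases ha.eq_or_lt with rfl | ha
  · simp only [zero_add, zero_div]
    positivity
  rw [div_le_div_iff₀ (by linarith) (by linarith)]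
  nlinarith

theorem phiStar_monotone_general
    (M : ℕ) (hM : 2 ≤ M) (σ σ' : Equiv.Perm (Fin M) → ℝ) (hσ : IsProfile M σ)
    (i : Fin M) (rhat rnew : Equiv.Perm (Fin M))
    (himp : rnew i ≤ rhat i)
    (hoth : ∀ j k : Fin M, j ≠ i → k ≠ i → (rnew j < rnew k ↔ rhat j < rhat k))
    (ε : ℝ) (hε0 : 0 < ε) (hε1 : ε ≤ σ rhat)
    (hσ' : ∀ r, σ' r = σ r + (if r = rnew then ε else 0) - (if r = rhat then ε else 0)) :
    PhiStar M σ i ≤ PhiStar M σ' i := by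
  have himpr : Improves i rhat rnew := ⟨himp, hoth⟩
  have hσ'nonneg := nonneg_of_transfer hσ.1 hε0.le hε1 hσ'
  have hui : minPref M σ i ≤ minPref M σ' i :=
    minPref_mono hM fun _ _ => pref_le_pref_of_transfer hε0.le hσ' himpr.self_lt_of_lt
  have huj : ∀ j ∈ univ.erase i, minPref M σ' j ≤ minPref M σ j := fun j hj =>
    minPref_mono hM fun _ _ =>
      pref_of_transfer_le_pref hε0.le hσ' (himpr.lt_of_lt_of_ne (ne_of_mem_erase hj))
  unfold PhiStar
  rw [← add_sum_erase _ _ (mem_univ i), ← add_sum_erase _ _ (mem_univ i)]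
  exact div_add_le_div_add (minPref_nonneg hσ.1 i)
    (sum_nonneg fun j _ => minPref_nonneg hσ'nonneg j) hui (sum_le_sum huj)

/-- monotonicity of `Φ*`: moving mass `ε` from a supported
ranking `r̂` to a ranking `r'` that improves the position of `y_i` while
keeping the relative order of the other alternatives cannot decrease
`Φ*(σ)(y_i)`. -/
theorem phiStar_monotone
    (M : ℕ) (hM : 2 ≤ M) (σ σ' : Equiv.Perm (Fin M) → ℝ) (hσ : IsProfile M σ)
    (i : Fin M) (rhat rnew : Equiv.Perm (Fin M)) (hpos : 0 < σ rhat)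
    (himp : rnew i ≤ rhat i)
    (hoth : ∀ j k : Fin M, j ≠ i → k ≠ i → (rnew j < rnew k ↔ rhat j < rhat k))
    (ε : ℝ) (hε0 : 0 < ε) (hε1 : ε ≤ σ rhat)
    (hσ' : ∀ r, σ' r = σ r + (if r = rnew then ε else 0) - (if r = rhat then ε else 0)) :
    PhiStar M σ i ≤ PhiStar M σ' i :=
  phiStar_monotone_general M hM σ σ' hσ i rhat rnew himp hoth ε hε0 hε1 hσ'
end
end

section
/- Let σ be a profile over rankings of M ≥ 2 alternatives and let δ ∈ [0,1]. Call an alternative y_i δ-dominated if there exists j ≠ i with P^σ(y_j ≻ y_i) ≥ δ, let N^σ_δ denote the number of alternatives that are not δ-dominated, and let w^{σ,1} and w^{σ,2} denote the largest and second-largest entries of the top-choice share vector w^σ. Assume there is an alternative attaining the maximal share w^{σ,1} that is not δ-dominated. Then 1 ≤ Σ_{i=1}^M u_i ≤ (N^σ_δ − 1)(1 − w^{σ,1}) + (1 − w^{σ,2}) + (M − N^σ_δ)(1 − δ); equivalently, (Σ_{i=1}^M u_i)^{-1} lies in the interval [ ((N^σ_δ − 1)(1 − w^{σ,1}) + (1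 − w^{σ,2}) + (M − N^σ_δ)(1 − δ))^{-1}, 1 ]. -/
open Finset

noncomputable section

/-! Every `u_i` is at least the top-choice share `w_i` (whoever ranks `y_i` first prefers it to
every `y_j`), and the shares sum to one; this gives the lower bound. For the upper bound,
`u_i ≤ P(y_i ≻ y_j) = 1 - P(y_j ≻ y_i)` for any `j ≠ i`, and `P(y_j ≻ y_i) ≥ w_j`. Comparing a
non-dominated `y_i ≠ y_k` with `y_k`, `y_k` with `y_l`, and a dominated `y_i` with a
`y_j` dominating it bounds the three groups of summands by `1 - w_k`, `1 - w_l` and `1 - δ`. -/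

section Bookkeeping

variable {ι : Type*} [Fintype ι]

theorem sum_le_of_le_on_setOf (f : ι → ℝ) {p : ι → Prop} {k : ι} (hk : p k) {a b c : ℝ}
    (hp : ∀ i, p i → i ≠ k → f i ≤ a) (hfk : f k ≤ b) (hnp : ∀ i, ¬ p i → f i ≤ c) :
    ∑ i, f i ≤ (({i | p i}.ncard : ℝ) - 1) * a + b
      + ((Fintype.card ι : ℝ) - {i | p i}.ncard) * c := by
  classical
  set P := univ.filter p
  have hcard : {i | p i}.ncard = #P := by
    rw [Set.ncard_eq_toFinset_card', Set.toFinset_ofPred]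
  have hkP : k ∈ P := mem_filter.2 ⟨mem_univ k, hk⟩
  have hsplit : ∑ i, f i = ∑ i ∈ P.erase k, f i + f k + ∑ i ∈ univ.filter (¬ p ·), f i := by
    rw [sum_erase_add P f hkP, sum_filter_add_sum_filter_not]
  have hP : ∑ i ∈ P.erase k, f i ≤ ((#P : ℝ) - 1) * a := by
    have := sum_le_card_nsmul (P.erase k) f a fun i hi =>
      hp i (mem_filter.1 (mem_of_mem_erase hi)).2 (ne_of_mem_erase hi)
    rwa [card_erase_of_mem hkP, nsmul_eq_mul, Nat.cast_pred (card_pos.2 ⟨k, hkP⟩)] at this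
  have hnP : ∑ i ∈ univ.filter (¬ p ·), f i ≤ ((Fintype.card ι : ℝ) - #P) * c := by
    have := sum_le_card_nsmul (univ.filter (¬ p ·)) f c fun i hi => hnp i (mem_filter.1 hi).2
    rw [nsmul_eq_mul, filter_not, card_sdiff_of_subset (filter_subset p univ), card_univ,
      Nat.cast_sub (card_le_univ P)] at this
    rwa [filter_not]
  rw [hcard, hsplit]
  linarith

end Bookkeeping

namespace IsProfile

variable {M : ℕ} {σ : Equiv.Perm (Fin M) → ℝ}

theorem pref_add_pref_swap (hσ : IsProfile M σ) {i j : Fin M} (hij : i ≠ j) :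
    Pref M σ i j + Pref M σ j i = 1 := by
  rw [Pref, Pref, ← sum_add_distrib]
  conv_rhs => rw [← hσ.2]
  refine sum_congr rfl fun r _ => ?_
  rcases (r.injective.ne hij).lt_or_gt with h | h <;> simp [h, h.not_gt]

theorem topShare_le_pref (hσ : IsProfile M σ) {i j : Fin M} (hij : i ≠ j) :
    topShare M σ i ≤ Pref M σ i j := by
  refine sum_le_sum fun r _ => ?_
  split_ifs with htop hlt hlt
  · rw [mul_one]
  · exact absurd ((Fin.le_def.2 (htop ▸ Nat.zero_le _)).lt_of_ne (r.injective.ne hij)) hlt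
  · rw [mul_one]; exact hσ.1 r
  · rw [mul_zero]

theorem sum_topShare [NeZero M] (hσ : IsProfile M σ) : ∑ i, topShare M σ i = 1 := by
  unfold topShare
  rw [← hσ.2, sum_comm]
  refine sum_congr rfl fun r _ => ?_
  have htop : ∀ i, (r i : ℕ) = 0 ↔ i = r.symm 0 := fun i => by
    rw [Equiv.eq_symm_apply, Fin.val_eq_zero_iff]
  simp only [htop, sum_ite_eq', mem_univ, if_true]

end IsProfile

section MinPref

variable {M : ℕ} {σ : Equiv.Perm (Fin M) → ℝ}

theorem minPref_le_pref {i j : Fin M} (hji : j ≠ i) : minPref M σ i ≤ Pref M σ i j := by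
  refine csInf_le ((Set.finite_range (Pref M σ i)).subset ?_).bddBelow ⟨j, hji, rfl⟩
  rintro x ⟨j, -, rfl⟩
  exact Set.mem_range_self j

theorem IsProfile.minPref_le_one_sub_pref (hσ : IsProfile M σ) {i j : Fin M} (hji : j ≠ i) :
    minPref M σ i ≤ 1 - Pref M σ j i := by
  linarith [minPref_le_pref (σ := σ) hji, hσ.pref_add_pref_swap hji]

theorem IsProfile.minPref_le_one_sub_topShare (hσ : IsProfile M σ) {i j : Fin M} (hji : j ≠ i) :
    minPref M σ i ≤ 1 - topShare M σ j := by
  linarith [hσ.minPref_le_one_sub_pref hji, hσ.topShare_le_pref hji]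

theorem IsProfile.topShare_le_minPref [Nontrivial (Fin M)] (hσ : IsProfile M σ) (i : Fin M) :
    topShare M σ i ≤ minPref M σ i := by
  obtain ⟨j, hji⟩ := exists_ne i
  refine le_csInf ⟨_, j, hji, rfl⟩ ?_
  rintro x ⟨j, hji, rfl⟩
  exact hσ.topShare_le_pref hji.symm

theorem IsProfile.one_le_sum_minPref [Nontrivial (Fin M)] (hσ : IsProfile M σ) :
    1 ≤ ∑ i, minPref M σ i := by
  have : NeZero M := ⟨by rintro rfl; exact not_nontrivial (Fin 0) ‹_›⟩
  rw [← hσ.sum_topShare]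
  exact sum_le_sum fun i _ => hσ.topShare_le_minPref i

end MinPref

theorem sum_u_bounds_general
    (M : ℕ) (σ : Equiv.Perm (Fin M) → ℝ) (hσ : IsProfile M σ)
    (δ : ℝ)
    (dominated : Fin M → Prop)
    (hdom : ∀ i, dominated i ↔ ∃ j, j ≠ i ∧ δ ≤ Pref M σ j i)
    (N : ℕ) (hN : N = {i : Fin M | ¬ dominated i}.ncard)
    (k l : Fin M)
    (hknd : ¬ dominated k)
    (hl : l ≠ k) :
    1 ≤ ∑ i, minPref M σ i ∧
    ∑ i, minPref M σ i ≤
      ((N : ℝ) - 1) * (1 - topShare M σ k) + (1 - topShare M σ l)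
        + ((M : ℝ) - N) * (1 - δ) := by
  have : Nontrivial (Fin M) := ⟨⟨l, k, hl⟩⟩
  refine ⟨hσ.one_le_sum_minPref, ?_⟩
  have hbound := sum_le_of_le_on_setOf (minPref M σ) (c := 1 - δ) hknd
    (fun i _ hik => hσ.minPref_le_one_sub_topShare (Ne.symm hik))
    (hσ.minPref_le_one_sub_topShare hl)
    (fun i hi => by
      obtain ⟨j, hji, hδ⟩ := (hdom i).1 (not_not.1 hi)
      linarith [hσ.minPref_le_one_sub_pref hji])
  rwa [Fintype.card_fin, ← hN] at hbound

/-- with `N^σ_δ` the number of alternatives that are not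
`δ`-dominated, and `w^{σ,1}, w^{σ,2}` the largest and second-largest
top-choice shares (the largest being attained by some non-`δ`-dominated
alternative `k`), we have
`1 ≤ Σ_i u_i ≤ (N^σ_δ − 1)(1 − w^{σ,1}) + (1 − w^{σ,2}) + (M − N^σ_δ)(1 − δ)`. -/
theorem sum_u_bounds
    (M : ℕ) (hM : 2 ≤ M) (σ : Equiv.Perm (Fin M) → ℝ) (hσ : IsProfile M σ)
    (δ : ℝ) (hδ : δ ∈ Set.Icc (0 : ℝ) 1)
    (dominated : Fin M → Prop)
    (hdom : ∀ i, dominated i ↔ ∃ j, j ≠ i ∧ δ ≤ Pref M σ j i)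
    (N : ℕ) (hN : N = {i : Fin M | ¬ dominated i}.ncard)
    (k l : Fin M)
    (hk : ∀ j, topShare M σ j ≤ topShare M σ k)
    (hknd : ¬ dominated k)
    (hl : l ≠ k) (hlmax : ∀ j, j ≠ k → topShare M σ j ≤ topShare M σ l) :
    1 ≤ ∑ i, minPref M σ i ∧
    ∑ i, minPref M σ i ≤
      ((N : ℝ) - 1) * (1 - topShare M σ k) + (1 - topShare M σ l)
        + ((M : ℝ) - N) * (1 - δ) :=
  sum_u_bounds_general M σ hσ δ dominated hdom N hN k l hknd hl
end
end
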